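/- Let k = ℝ or ℂ. There exist β ∈ GL_3(k) and a real number r > 1 such that for every λ ∈ k with |λ| ≥ 2 the homomorphism ρ_λ : F_2 → GL_3(k), defined on a free basis a, b by ρ_λ(a) := diag(λ, λ, λ⁻²) and ρ_λ(b) := β·diag(10^r, 1, 10^{−r})·β⁻¹, is injective (so the subgroup of GL_3(k) generated by ρ_λ(a) and ρ_λ(b) is free of rank 2) and is a quasi-isometric embedding: there exist c, θ > 0 such that ‖ρ_λ(γ)‖ · ‖ρ_λ(γ)⁻¹‖ ≥ c·e^{θ|γ|} for all γ ∈ F_2. Note that ρ_λ(a) has two eigenvalues of equal maximal modulus, so each ρ_λ is a quasi-isometric embedding whose image contains a non-proximal matrix. -/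

import Mathlib

/-!
On the plane `v 1 = 0` the generator `a = diag(λ, λ, λ⁻²)` acts as `(x, z) ↦ (λ x, λ⁻² z)` and
`b = β diag(100, 1, 1/100) β⁻¹` as multiplication by `100` on `x + z` and by `1/100` on `x - z`.
Each of `a^{±1}`, `b^{±1}` therefore has an attracting cone in this plane, and the four cones play
ping-pong: every letter maps every cone except the one of its inverse into its own cone, expanding
the sup norm by a factor `3/2`. Along a reduced word of length `n` a suitable vector grows by
`(3/2)^n`, which gives faithfulness and, applied to `γ` and `γ⁻¹`, the lower bound
`‖ρ γ‖ ‖ρ γ⁻¹‖ ≥ (9/4)^n / 3` for the Euclidean operator norms.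
-/

noncomputable section

def eN {𝕜 : Type*} [RCLike 𝕜] {n : ℕ} (v : Fin n → 𝕜) : ℝ :=
  Real.sqrt (∑ i, ‖v i‖ ^ 2)

def opN {𝕜 : Type*} [RCLike 𝕜] {n : ℕ} (A : Matrix (Fin n) (Fin n) 𝕜) : ℝ :=
  sInf {c : ℝ | 0 ≤ c ∧ ∀ v : Fin n → 𝕜, eN (A.mulVec v) ≤ c * eN v}

section PingPong

open FreeGroup

variable {α M V : Type*} [Monoid M] [MulAction M V]

/-- `x.1 = y.1 → x.2 = y.2` says that the word `x y` is reduced. -/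
def PingPongWithGrowth (ρ : FreeGroup α →* M) (C : α × Bool → Set V) (μ : V → ℝ) (q : ℝ) :
    Prop :=
  ∀ x y : α × Bool, (x.1 = y.1 → x.2 = y.2) → ∀ v ∈ C y,
    ρ (mk [x]) • v ∈ C x ∧ q * μ v ≤ μ (ρ (mk [x]) • v)

namespace PingPongWithGrowth

variable {ρ : FreeGroup α →* M} {C : α × Bool → Set V} {μ : V → ℝ} {q : ℝ}

theorem mk_smul_mem_and_pow_mul_le (h : PingPongWithGrowth ρ C μ q) (hq : 0 ≤ q) :
    ∀ {L : List (α × Bool)} {y : α × Bool}, IsReduced (L ++ [y]) → ∀ v ∈ C y,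
      ρ (mk L) • v ∈ C (L.headD y) ∧ q ^ L.length * μ v ≤ μ (ρ (mk L) • v)
  | [], y, _, v, hv => by simpa [← one_eq_mk] using hv
  | x :: L, y, hL, v, hv => by
    have hhead : (L ++ [y]).head? = some (L.headD y) := by cases L <;> rfl
    obtain ⟨hxL, hL⟩ := List.isChain_cons.1 hL
    obtain ⟨hmem, hgrowth⟩ := mk_smul_mem_and_pow_mul_le h hq hL v hv
    obtain ⟨hmem', hgrowth'⟩ := h x _ (hxL _ hhead) _ hmem
    rw [show mk (x :: L) = mk [x] * mk L from (mul_mk (L₁ := [x])).symm, _root_.map_mul,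
      mul_smul]
    refine ⟨hmem', ?_⟩
    calc q ^ (x :: L).length * μ v = q * (q ^ L.length * μ v) := by
          rw [List.length_cons, pow_succ]; ring
      _ ≤ q * μ (ρ (mk L) • v) := by gcongr
      _ ≤ _ := hgrowth'

variable [DecidableEq α]

theorem pow_norm_mul_le (h : PingPongWithGrowth ρ C μ q) (hq : 0 ≤ q) (γ : FreeGroup α)
    (d : α × Bool) : ∀ v ∈ C (γ.toWord.getLastD d), q ^ γ.norm * μ v ≤ μ (ρ γ • v) := by
  intro v hv
  have hred : IsReduced (γ.toWord ++ [γ.toWord.getLastD d]) := by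
    refine List.isChain_append.2 ⟨isReduced_toWord, List.isChain_singleton _, ?_⟩
    intro x hx y hy
    rw [Option.mem_def] at hx
    obtain rfl : y = x := by simpa [List.getLastD_eq_getLast?, hx] using hy.symm
    exact fun _ => rfl
  simpa [FreeGroup.norm, mk_toWord] using (h.mk_smul_mem_and_pow_mul_le hq hred v hv).2

theorem exists_pow_norm_mul_le [Nonempty α] (h : PingPongWithGrowth ρ C μ q) (hq : 0 ≤ q)
    (hC : ∀ y, ∃ v ∈ C y, 0 < μ v) (γ : FreeGroup α) :
    ∃ v, 0 < μ v ∧ q ^ γ.norm * μ v ≤ μ (ρ γ • v) := by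
  obtain ⟨v, hv, hμ⟩ := hC (γ.toWord.getLastD (Classical.arbitrary α, true))
  exact ⟨v, hμ, h.pow_norm_mul_le hq γ _ v hv⟩

end PingPongWithGrowth

theorem injective_of_pow_norm_mul_le [DecidableEq α] {G : Type*} [Group G] [MulAction G V]
    {ρ : FreeGroup α →* G} {μ : V → ℝ} {q : ℝ} (hq : 1 < q)
    (hρ : ∀ γ, ∃ v, 0 < μ v ∧ q ^ γ.norm * μ v ≤ μ (ρ γ • v)) : Function.Injective ρ := by
  refine (injective_iff_map_eq_one ρ).2 fun γ hγ => ?_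
  obtain ⟨v, hμ, hle⟩ := hρ γ
  rw [hγ, one_smul] at hle
  by_contra hne
  have : 1 < q ^ γ.norm := one_lt_pow₀ hq (mt norm_eq_zero.1 hne)
  nlinarith

end PingPong

section EuclideanOperatorNorm

open Matrix

variable {𝕜 : Type*} [RCLike 𝕜] {n : ℕ}

lemma eN_eq_norm (v : Fin n → 𝕜) : eN v = ‖WithLp.toLp 2 v‖ := by
  rw [eN, EuclideanSpace.norm_eq]

lemma opN_eq_norm_toEuclideanCLM (A : Matrix (Fin n) (Fin n) 𝕜) :
    opN A = ‖toEuclideanCLM (n := Fin n) (𝕜 := 𝕜) A‖ := by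
  rw [opN, ContinuousLinearMap.norm_def]
  simp only [eN_eq_norm]
  congr 1; ext c
  exact and_congr_right fun _ => ⟨fun h x => h x.ofLp, fun h v => h (WithLp.toLp 2 v)⟩

lemma eN_mulVec_le (A : Matrix (Fin n) (Fin n) 𝕜) (v : Fin n → 𝕜) :
    eN (A *ᵥ v) ≤ opN A * eN v := by
  simpa [eN_eq_norm, opN_eq_norm_toEuclideanCLM] using
    (toEuclideanCLM (n := Fin n) (𝕜 := 𝕜) A).le_opNorm (WithLp.toLp 2 v)

lemma norm_le_eN (v : Fin n → 𝕜) : ‖v‖ ≤ eN v := by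
  rw [eN_eq_norm]
  exact (pi_norm_le_iff_of_nonneg (norm_nonneg _)).2 (PiLp.norm_apply_le (WithLp.toLp 2 v))

lemma eN_le_sqrt_mul_norm (v : Fin n → 𝕜) : eN v ≤ √n * ‖v‖ := by
  rw [eN, ← Real.sqrt_sq (norm_nonneg v), ← Real.sqrt_mul (Nat.cast_nonneg n)]
  gcongr
  simpa using Finset.sum_le_sum fun i (_ : i ∈ Finset.univ) =>
    pow_le_pow_left₀ (norm_nonneg _) (norm_le_pi_norm v i) 2

lemma le_sqrt_mul_opN_of_mul_norm_le {A : Matrix (Fin n) (Fin n) 𝕜} {v : Fin n → 𝕜} {c : ℝ}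
    (hv : 0 < ‖v‖) (h : c * ‖v‖ ≤ ‖A *ᵥ v‖) : c ≤ √n * opN A := by
  refine le_of_mul_le_mul_right ?_ hv
  calc c * ‖v‖ ≤ ‖A *ᵥ v‖ := h
    _ ≤ eN (A *ᵥ v) := norm_le_eN _
    _ ≤ opN A * eN v := eN_mulVec_le A v
    _ ≤ opN A * (√n * ‖v‖) := by
      gcongr
      · rw [opN_eq_norm_toEuclideanCLM]; positivity
      · exact eN_le_sqrt_mul_norm v
    _ = √n * opN A * ‖v‖ := by ring

end EuclideanOperatorNorm

def Matrix.diagonalUnit {m R : Type*} [Fintype m] [DecidableEq m] [Semiring R] (d : m → Rˣ) :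
    (Matrix m m R)ˣ where
  val := diagonal fun i => d i
  inv := diagonal fun i => ↑(d i)⁻¹
  val_inv := by simp [diagonal_mul_diagonal]
  inv_val := by simp [diagonal_mul_diagonal]

lemma Matrix.coe_diagonalUnit {m R : Type*} [Fintype m] [DecidableEq m] [Semiring R]
    (d : m → Rˣ) : (diagonalUnit d : Matrix m m R) = diagonal fun i => (d i : R) :=
  rfl

namespace NonProximalPingPong

open Matrix FreeGroup

variable {𝕜 : Type*} [RCLike 𝕜]

lemma norm_eq_max_of_apply_one_eq_zero {v : Fin 3 → 𝕜} (hv : v 1 = 0) :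
    ‖v‖ = max ‖v 0‖ ‖v 2‖ := by
  refine le_antisymm ((pi_norm_le_iff_of_nonneg (by positivity)).2 fun i => ?_)
    (max_le (norm_le_pi_norm v 0) (norm_le_pi_norm v 2))
  fin_cases i
  · exact le_max_left _ _
  · simp [hv]
  · exact le_max_right _ _

/-- The ping-pong cones of the letters `a, a⁻¹, b, b⁻¹`, in the coordinates `(x, z) = (v 0, v 2)`
of the plane `v 1 = 0`. -/
def planeCone : Fin 2 × Bool → 𝕜 → 𝕜 → Prop
  | (0, true), x, z => 2 * ‖z‖ ≤ ‖x‖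
  | (0, false), x, z => 2 * ‖x‖ ≤ ‖z‖
  | (1, true), x, z => 10 * ‖x - z‖ ≤ ‖x + z‖
  | (1, false), x, z => 10 * ‖x + z‖ ≤ ‖x - z‖

/-- A region that the letter `x` maps into its own cone while expanding by `3/2`; it contains the
cones of all letters other than `x⁻¹`. -/
def basin : Fin 2 × Bool → 𝕜 → 𝕜 → Prop
  | (0, true), x, z => 9 * ‖z‖ ≤ 11 * ‖x‖
  | (0, false), x, z => 9 * ‖x‖ ≤ 11 * ‖z‖
  | (1, true), x, z => ‖x‖ + ‖z‖ ≤ 3 * ‖x + z‖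
  | (1, false), x, z => ‖x‖ + ‖z‖ ≤ 3 * ‖x - z‖

lemma basin_of_planeCone {x y : Fin 2 × Bool} (hxy : x.1 = y.1 → x.2 = y.2) {p q : 𝕜}
    (h : planeCone y p q) : basin x p q := by
  have := norm_add_le p q
  have := norm_sub_le p q
  have : ‖p‖ ≤ ‖p + q‖ + ‖q‖ := by simpa using norm_sub_le (p + q) q
  have : ‖q‖ ≤ ‖p + q‖ + ‖p‖ := by simpa using norm_sub_le (p + q) p
  have : ‖p‖ ≤ ‖p - q‖ + ‖q‖ := by simpa using norm_add_le (p - q) q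
  have : ‖q‖ ≤ ‖p‖ + ‖p - q‖ := by simpa using norm_sub_le p (p - q)
  have : 2 * ‖p‖ ≤ ‖p + q‖ + ‖p - q‖ := by
    simpa [← two_mul, RCLike.norm_two] using norm_add_le (p + q) (p - q)
  have : 2 * ‖q‖ ≤ ‖p + q‖ + ‖p - q‖ := by
    simpa [← two_mul, RCLike.norm_two] using norm_sub_le (p + q) (p - q)
  obtain ⟨i, b⟩ := x
  obtain ⟨j, c⟩ := y
  fin_cases i <;> fin_cases j <;> cases b <;> cases c <;>
    first
    | exact absurd (hxy rfl) (by decide)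
    | (simp only [planeCone, basin] at h ⊢; linarith)

lemma expand_of_basin_diag {x z s t : 𝕜} (hs : 2 ≤ ‖s‖) (ht : ‖t‖ ≤ 1 / 2)
    (h : 9 * ‖z‖ ≤ 11 * ‖x‖) :
    2 * ‖t * z‖ ≤ ‖s * x‖ ∧ 3 / 2 * max ‖x‖ ‖z‖ ≤ max ‖s * x‖ ‖t * z‖ := by
  have hx := norm_nonneg x
  have hsx : 2 * ‖x‖ ≤ ‖s * x‖ := by rw [norm_mul]; gcongr
  have htz : ‖t * z‖ ≤ ‖z‖ / 2 := by rw [norm_mul]; nlinarith [norm_nonneg z]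
  have hmax : max ‖x‖ ‖z‖ ≤ 11 / 9 * ‖x‖ := max_le (by linarith) (by linarith)
  exact ⟨by linarith, by linarith [le_max_left ‖s * x‖ ‖t * z‖]⟩

lemma expand_of_basin_conj {x z x' z' s t : 𝕜} (hs : 9 ≤ ‖s‖) (ht : ‖t‖ ≤ 1 / 9)
    (hadd : x' + z' = s * (x + z)) (hsub : x' - z' = t * (x - z))
    (h : ‖x‖ + ‖z‖ ≤ 3 * ‖x + z‖) :
    10 * ‖x' - z'‖ ≤ ‖x' + z'‖ ∧ 3 / 2 * max ‖x‖ ‖z‖ ≤ max ‖x'‖ ‖z'‖ := by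
  have hU : 9 * ‖x + z‖ ≤ ‖x' + z'‖ := by rw [hadd, norm_mul]; gcongr
  have hW : ‖x' - z'‖ ≤ ‖x - z‖ / 9 := by
    rw [hsub, norm_mul]; nlinarith [norm_nonneg (x - z)]
  have hmax : max ‖x‖ ‖z‖ ≤ ‖x‖ + ‖z‖ :=
    max_le (le_add_of_nonneg_right (norm_nonneg z)) (le_add_of_nonneg_left (norm_nonneg x))
  have := norm_sub_le x z
  have := norm_add_le x' z'
  constructor
  · linarith [norm_nonneg (x + z)]
  · linarith [le_max_left ‖x'‖ ‖z'‖, le_max_right ‖x'‖ ‖z'‖]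

def cone (y : Fin 2 × Bool) : Set (Fin 3 → 𝕜) := {v | v 1 = 0 ∧ planeCone y (v 0) (v 2)}

/-- The matrix `β` of the statement. -/
def sumDiffUnit : (Matrix (Fin 3) (Fin 3) 𝕜)ˣ where
  val := !![1, 0, 1; 0, 1, 0; 1, 0, -1]
  inv := !![1 / 2, 0, 1 / 2; 0, 1, 0; 1 / 2, 0, -(1 / 2)]
  val_inv := by rw [mul_fin_three, one_fin_three]; norm_num
  inv_val := by rw [mul_fin_three, one_fin_three]; norm_num

def sumDiffConj (d : Fin 3 → 𝕜) : Matrix (Fin 3) (Fin 3) 𝕜 :=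
  sumDiffUnit.val * diagonal d * sumDiffUnit⁻¹.val

lemma sumDiffConj_mulVec (d v : Fin 3 → 𝕜) :
    (sumDiffConj d *ᵥ v) 0 + (sumDiffConj d *ᵥ v) 2 = d 0 * (v 0 + v 2) ∧
      (sumDiffConj d *ᵥ v) 0 - (sumDiffConj d *ᵥ v) 2 = d 2 * (v 0 - v 2) ∧
      (sumDiffConj d *ᵥ v) 1 = d 1 * v 1 := by
  rw [sumDiffConj, ← mulVec_mulVec, ← mulVec_mulVec]
  simp [sumDiffUnit, mulVec, dotProduct, Fin.sum_univ_three]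
  exact ⟨by ring, by ring⟩

lemma mulVec_mem_cone_a {d v : Fin 3 → 𝕜} (h0 : 2 ≤ ‖d 0‖) (h2 : ‖d 2‖ ≤ 1 / 2)
    (hv1 : v 1 = 0) (hv : basin (0, true) (v 0) (v 2)) :
    diagonal d *ᵥ v ∈ cone (0, true) ∧ 3 / 2 * ‖v‖ ≤ ‖diagonal d *ᵥ v‖ := by
  have hw1 : (diagonal d *ᵥ v) 1 = 0 := by simp [mulVec_diagonal, hv1]
  rw [norm_eq_max_of_apply_one_eq_zero hv1, norm_eq_max_of_apply_one_eq_zero hw1]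
  simp only [cone, Set.mem_ofPred_eq, hw1, mulVec_diagonal, true_and]
  exact expand_of_basin_diag h0 h2 hv

lemma mulVec_mem_cone_aInv {d v : Fin 3 → 𝕜} (h0 : ‖d 0‖ ≤ 1 / 2) (h2 : 2 ≤ ‖d 2‖)
    (hv1 : v 1 = 0) (hv : basin (0, false) (v 0) (v 2)) :
    diagonal d *ᵥ v ∈ cone (0, false) ∧ 3 / 2 * ‖v‖ ≤ ‖diagonal d *ᵥ v‖ := by
  have hw1 : (diagonal d *ᵥ v) 1 = 0 := by simp [mulVec_diagonal, hv1]
  rw [norm_eq_max_of_apply_one_eq_zero hv1, norm_eq_max_of_apply_one_eq_zero hw1]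
  simp only [cone, Set.mem_ofPred_eq, hw1, mulVec_diagonal, true_and]
  rw [max_comm ‖v 0‖, max_comm ‖d 0 * v 0‖]
  exact expand_of_basin_diag h2 h0 hv

lemma mulVec_mem_cone_b {d v : Fin 3 → 𝕜} (h0 : 9 ≤ ‖d 0‖) (h2 : ‖d 2‖ ≤ 1 / 9)
    (hv1 : v 1 = 0) (hv : basin (1, true) (v 0) (v 2)) :
    sumDiffConj d *ᵥ v ∈ cone (1, true) ∧ 3 / 2 * ‖v‖ ≤ ‖sumDiffConj d *ᵥ v‖ := by
  obtain ⟨hadd, hsub, h1⟩ := sumDiffConj_mulVec d v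
  have hw1 : (sumDiffConj d *ᵥ v) 1 = 0 := by rw [h1, hv1, mul_zero]
  rw [norm_eq_max_of_apply_one_eq_zero hv1, norm_eq_max_of_apply_one_eq_zero hw1]
  obtain ⟨hcone, hgrowth⟩ := expand_of_basin_conj h0 h2 hadd hsub hv
  exact ⟨⟨hw1, hcone⟩, hgrowth⟩

lemma mulVec_mem_cone_bInv {d v : Fin 3 → 𝕜} (h0 : ‖d 0‖ ≤ 1 / 9) (h2 : 9 ≤ ‖d 2‖)
    (hv1 : v 1 = 0) (hv : basin (1, false) (v 0) (v 2)) :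
    sumDiffConj d *ᵥ v ∈ cone (1, false) ∧ 3 / 2 * ‖v‖ ≤ ‖sumDiffConj d *ᵥ v‖ := by
  obtain ⟨hadd, hsub, h1⟩ := sumDiffConj_mulVec d v
  have hw1 : (sumDiffConj d *ᵥ v) 1 = 0 := by rw [h1, hv1, mul_zero]
  rw [norm_eq_max_of_apply_one_eq_zero hv1, norm_eq_max_of_apply_one_eq_zero hw1]
  -- `z ↦ -z` exchanges the roles of `x + z` and `x - z`
  have := expand_of_basin_conj (z := -v 2) (z' := -(sumDiffConj d *ᵥ v) 2) h2 h0
    (by simpa only [← sub_eq_add_neg] using hsub) (by simpa only [sub_neg_eq_add] using hadd)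
    (by rw [norm_neg, ← sub_eq_add_neg]; exact hv)
  simp only [sub_neg_eq_add, ← sub_eq_add_neg, norm_neg] at this
  exact ⟨⟨hw1, this.1⟩, this.2⟩

/-- `ρ_λ` with `u = λ` and `s = 10^r`. -/
def rep (u s : 𝕜ˣ) : FreeGroup (Fin 2) →* (Matrix (Fin 3) (Fin 3) 𝕜)ˣ :=
  FreeGroup.lift ![diagonalUnit ![u, u, (u ^ 2)⁻¹],
    sumDiffUnit * diagonalUnit ![s, 1, s⁻¹] * sumDiffUnit⁻¹]

lemma rep_of_zero (u s : 𝕜ˣ) : rep u s (of 0) = diagonalUnit ![u, u, (u ^ 2)⁻¹] := by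
  simp [rep]

lemma rep_of_one (u s : 𝕜ˣ) :
    rep u s (of 1) = sumDiffUnit * diagonalUnit ![s, 1, s⁻¹] * sumDiffUnit⁻¹ := by
  simp [rep]

theorem pingPongWithGrowth_rep {u s : 𝕜ˣ} (hu : 2 ≤ ‖(u : 𝕜)‖) (hs : 9 ≤ ‖(s : 𝕜)‖) :
    PingPongWithGrowth (rep u s) (cone (𝕜 := 𝕜)) (‖·‖) (3 / 2) := by
  rintro x y hxy v ⟨hv1, hv⟩
  have hbasin := basin_of_planeCone hxy hv
  have hu₂ : 2 ≤ ‖(u : 𝕜)‖ ^ 2 := by nlinarith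
  have hu_inv : ‖(u : 𝕜)‖⁻¹ ≤ 2⁻¹ := inv_anti₀ two_pos hu
  have hu₂_inv : (‖(u : 𝕜)‖ ^ 2)⁻¹ ≤ 2⁻¹ := inv_anti₀ two_pos hu₂
  have hs_inv : ‖(s : 𝕜)‖⁻¹ ≤ 9⁻¹ := inv_anti₀ (by norm_num) hs
  match x with
  | (0, true) =>
    rw [show mk [(0, true)] = of (0 : Fin 2) from rfl, rep_of_zero, Units.smul_def]
    refine mulVec_mem_cone_a ?_ ?_ hv1 hbasin <;> simpa
  | (0, false) =>
    rw [show mk [(0, false)] = (of (0 : Fin 2))⁻¹ from rfl, _root_.map_inv, rep_of_zero,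
      Units.smul_def]
    refine mulVec_mem_cone_aInv ?_ ?_ hv1 hbasin <;> simpa
  | (1, true) =>
    rw [show mk [(1, true)] = of (1 : Fin 2) from rfl, rep_of_one, Units.smul_def]
    refine mulVec_mem_cone_b ?_ ?_ hv1 hbasin <;> simpa
  | (1, false) =>
    rw [show mk [(1, false)] = (of (1 : Fin 2))⁻¹ from rfl, _root_.map_inv, rep_of_one,
      _root_.mul_inv_rev, _root_.mul_inv_rev, inv_inv, ← mul_assoc, Units.smul_def]
    refine mulVec_mem_cone_bInv ?_ ?_ hv1 hbasin <;> simpa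

lemma exists_mem_cone (y : Fin 2 × Bool) : ∃ v ∈ cone (𝕜 := 𝕜) y, 0 < ‖v‖ :=
  match y with
  | (0, true) => ⟨![1, 0, 0], ⟨rfl, by simp [planeCone]⟩, by simp⟩
  | (0, false) => ⟨![0, 0, 1], ⟨rfl, by simp [planeCone]⟩, by simp⟩
  | (1, true) => ⟨![1, 0, 1], ⟨rfl, by simp [planeCone]⟩, by simp⟩
  | (1, false) => ⟨![1, 0, -1], ⟨rfl, by simp [planeCone, cons_val]⟩, by simp⟩

theorem pow_norm_div_sqrt_three_le_opN {u s : 𝕜ˣ} (hu : 2 ≤ ‖(u : 𝕜)‖) (hs : 9 ≤ ‖(s : 𝕜)‖)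
    (γ : FreeGroup (Fin 2)) :
    (3 / 2) ^ γ.norm / √3 ≤ opN (rep u s γ : Matrix (Fin 3) (Fin 3) 𝕜) := by
  obtain ⟨v, hv, hgrowth⟩ :=
    (pingPongWithGrowth_rep hu hs).exists_pow_norm_mul_le (by norm_num) exists_mem_cone γ
  rw [div_le_iff₀' (by positivity)]
  exact_mod_cast le_sqrt_mul_opN_of_mul_norm_le hv hgrowth

end NonProximalPingPong

open NonProximalPingPong

/-- for `k = ℝ` or `ℂ`, there exist `β ∈ GL_3(k)` and `r > 1` such that for
every `λ` with `|λ| ≥ 2` the representation of `F_2` sending the free basis to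
`diag(λ, λ, λ⁻²)` and `β·diag(10^r, 1, 10^{−r})·β⁻¹` is faithful and a quasi-isometric
embedding (its image contains the non-proximal matrix `diag(λ, λ, λ⁻²)`). -/
theorem stmt17 {𝕜 : Type*} [RCLike 𝕜] :
    ∃ (β : (Matrix (Fin 3) (Fin 3) 𝕜)ˣ) (r : ℝ), 1 < r ∧
      ∀ lam : 𝕜, 2 ≤ ‖lam‖ →
        ∃ ρ : FreeGroup (Fin 2) →* (Matrix (Fin 3) (Fin 3) 𝕜)ˣ,
          (ρ (FreeGroup.of 0) : Matrix (Fin 3) (Fin 3) 𝕜) =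
            Matrix.diagonal ![lam, lam, (lam ^ 2)⁻¹] ∧
          (ρ (FreeGroup.of 1) : Matrix (Fin 3) (Fin 3) 𝕜) =
            (β : Matrix (Fin 3) (Fin 3) 𝕜) *
              Matrix.diagonal ![(((10 : ℝ) ^ r : ℝ) : 𝕜), 1, (((10 : ℝ) ^ (-r) : ℝ) : 𝕜)] *
                ((β⁻¹ : _) : Matrix (Fin 3) (Fin 3) 𝕜) ∧
          Function.Injective ρ ∧
          ∃ c θ : ℝ, 0 < c ∧ 0 < θ ∧ ∀ γ : FreeGroup (Fin 2),
            c * Real.exp (θ * (FreeGroup.norm γ : ℝ)) ≤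
              opN (ρ γ : Matrix (Fin 3) (Fin 3) 𝕜) *
                opN (((ρ γ)⁻¹ : _) : Matrix (Fin 3) (Fin 3) 𝕜) := by
  refine ⟨sumDiffUnit, 2, one_lt_two, fun lam hlam => ?_⟩
  obtain ⟨u, rfl⟩ : ∃ u : 𝕜ˣ, (u : 𝕜) = lam := ⟨Units.mk0 lam (norm_pos_iff.1 (by linarith)), rfl⟩
  set s : 𝕜ˣ := Units.mk0 (((10 : ℝ) ^ (2 : ℝ) : ℝ) : 𝕜) (by norm_num)
  have hs : 9 ≤ ‖(s : 𝕜)‖ := by norm_num [s]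
  have hbound := pow_norm_div_sqrt_three_le_opN hlam hs
  refine ⟨rep u s, ?_, ?_, injective_of_pow_norm_mul_le (by norm_num : (1 : ℝ) < 3 / 2)
    ((pingPongWithGrowth_rep hlam hs).exists_pow_norm_mul_le (by norm_num) exists_mem_cone),
    1 / 3, Real.log (9 / 4), by norm_num, Real.log_pos (by norm_num), fun γ => ?_⟩
  · rw [rep_of_zero, Matrix.coe_diagonalUnit]
    congr 1
    funext i; fin_cases i <;> simp
  · rw [rep_of_one, Units.val_mul, Units.val_mul, Matrix.coe_diagonalUnit]
    congr 3
    funext i; fin_cases i <;> simp [s]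
  · have hinv := hbound γ⁻¹
    rw [FreeGroup.norm_inv_eq, map_inv] at hinv
    calc 1 / 3 * Real.exp (Real.log (9 / 4) * γ.norm)
        = (3 / 2) ^ γ.norm / √3 * ((3 / 2) ^ γ.norm / √3) := by
          rw [← Real.rpow_def_of_pos (by norm_num), Real.rpow_natCast, div_mul_div_comm,
            ← mul_pow, Real.mul_self_sqrt (by norm_num)]
          ring
      _ ≤ _ := mul_le_mul (hbound γ) hinv (by positivity) (le_trans (by positivity) (hbound γ))
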